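/- arXiv:2408.13527 — 5 statements merged into one kernel-verified Lean document; each statement's English description precedes it below -/
import Mathlib

section
/- Let (Ω, 𝒜, μ) be a measure space and let f : Ω → ℂ be measurable with ∫⁻ ENNReal.ofReal (Real.log (1 + |f x|)) ∂μ < ∞. Then the function α ↦ ∫⁻ ENNReal.ofReal (Real.log (1 + |α * f x|)) ∂μ tends to 0 as the complex number α tends to 0. -/
/-! Dominated convergence: since `‖α * f x‖ = ‖α‖ * ‖f x‖`, for `‖α‖ ≤ 1` the integrand is bounded
by the integrable function `log (1 + ‖f x‖)`, and it tends to `log 1 = 0` pointwise. -/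

open MeasureTheory Filter ENNReal Topology

section

variable {Ω : Type*} [MeasurableSpace Ω] {μ : Measure Ω} {g : Ω → ℝ}

theorem tendsto_lintegral_ofReal_log_one_add_mul (hg : AEMeasurable g μ) (hg0 : ∀ x, 0 ≤ g x)
    (hfin : ∫⁻ x, ENNReal.ofReal (Real.log (1 + g x)) ∂μ ≠ ∞) :
    Tendsto (fun t : ℝ => ∫⁻ x, ENNReal.ofReal (Real.log (1 + t * g x)) ∂μ)
      (𝓝[≥] 0) (𝓝 0) := by
  have hbound : ∀ᶠ t in 𝓝[≥] (0 : ℝ), ∀ x,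
      ENNReal.ofReal (Real.log (1 + t * g x)) ≤ ENNReal.ofReal (Real.log (1 + g x)) := by
    filter_upwards [Ico_mem_nhdsGE zero_lt_one] with t ⟨ht0, ht1⟩ x
    gcongr
    · exact add_pos_of_pos_of_nonneg one_pos (mul_nonneg ht0 (hg0 x))
    · exact mul_le_of_le_one_left (hg0 x) ht1.le
  have hlim : ∀ x, Tendsto (fun t : ℝ => ENNReal.ofReal (Real.log (1 + t * g x)))
      (𝓝[≥] 0) (𝓝 0) := fun x => by
    have hcont : ContinuousAt (fun t : ℝ => ENNReal.ofReal (Real.log (1 + t * g x))) 0 :=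
      ENNReal.continuous_ofReal.continuousAt.comp (ContinuousAt.log (by fun_prop) (by simp))
    simpa using hcont.continuousWithinAt (s := Set.Ici 0).tendsto
  simpa using tendsto_lintegral_filter_of_dominated_convergence' _
    (Eventually.of_forall fun t => (by fun_prop : AEMeasurable _ μ))
    (hbound.mono fun t ht => Eventually.of_forall ht) hfin (Eventually.of_forall hlim)

end

theorem lognorm_smul_tendsto_zero {Ω : Type*} [MeasurableSpace Ω] (μ : Measure Ω)
    (f : Ω → ℂ) (hf : Measurable f)
    (hfin : ∫⁻ x, ENNReal.ofReal (Real.log (1 + ‖f x‖)) ∂μ < ∞) :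
    Tendsto (fun α : ℂ =>
        ∫⁻ x, ENNReal.ofReal (Real.log (1 + ‖α * f x‖)) ∂μ)
      (nhds 0) (nhds 0) := by
  simp_rw [norm_mul]
  refine (tendsto_lintegral_ofReal_log_one_add_mul hf.norm.aemeasurable (fun x => norm_nonneg _)
    hfin.ne).comp ?_
  exact tendsto_nhdsWithin_of_tendsto_nhds_of_eventually_within _
    tendsto_norm_zero (Eventually.of_forall norm_nonneg)
end

section
/- Let (Ω, 𝒜, μ) be a measure space and let f, g : Ω → ℂ be measurable functions such that ∫⁻ ENNReal.ofReal (Real.log (1 + |f x|)) ∂μ < ∞ and ∫⁻ ENNReal.ofReal (Real.log (1 + |g x|)) ∂μ < ∞. Then ∫⁻ ENNReal.ofReal (Real.log (1 + |f x * g x|)) ∂μ < ∞. -/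
open MeasureTheory ENNReal

theorem Real.log_one_add_mul_le {a b : ℝ} (ha : 0 ≤ a) (hb : 0 ≤ b) :
    Real.log (1 + a * b) ≤ Real.log (1 + a) + Real.log (1 + b) := by
  rw [← Real.log_mul (by positivity) (by positivity)]
  exact Real.log_le_log (by positivity) (by nlinarith [mul_nonneg ha hb])

theorem ofReal_log_one_add_norm_mul_le {R : Type*} [SeminormedRing R] (a b : R) :
    ENNReal.ofReal (Real.log (1 + ‖a * b‖)) ≤
      ENNReal.ofReal (Real.log (1 + ‖a‖)) + ENNReal.ofReal (Real.log (1 + ‖b‖)) := by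
  calc ENNReal.ofReal (Real.log (1 + ‖a * b‖))
      ≤ ENNReal.ofReal (Real.log (1 + ‖a‖) + Real.log (1 + ‖b‖)) := by
        gcongr
        calc Real.log (1 + ‖a * b‖) ≤ Real.log (1 + ‖a‖ * ‖b‖) := by
              gcongr
              exact norm_mul_le a b
          _ ≤ _ := Real.log_one_add_mul_le (norm_nonneg a) (norm_nonneg b)
    _ ≤ _ := ENNReal.ofReal_add_le

theorem lintegral_ofReal_log_one_add_norm_mul_le {Ω R : Type*} [MeasurableSpace Ω]
    [SeminormedRing R] [MeasurableSpace R] [OpensMeasurableSpace R] (μ : Measure Ω)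
    {f : Ω → R} (g : Ω → R) (hf : AEMeasurable f μ) :
    ∫⁻ x, ENNReal.ofReal (Real.log (1 + ‖f x * g x‖)) ∂μ ≤
      (∫⁻ x, ENNReal.ofReal (Real.log (1 + ‖f x‖)) ∂μ) +
        ∫⁻ x, ENNReal.ofReal (Real.log (1 + ‖g x‖)) ∂μ := by
  have hf_log : AEMeasurable (fun x ↦ ENNReal.ofReal (Real.log (1 + ‖f x‖))) μ :=
    ENNReal.measurable_ofReal.comp_aemeasurable <| Real.measurable_log.comp_aemeasurable <|
      aemeasurable_const.add (continuous_norm.measurable.comp_aemeasurable hf)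
  rw [← lintegral_add_left' hf_log]
  exact lintegral_mono fun x ↦ ofReal_log_one_add_norm_mul_le (f x) (g x)

theorem lognorm_mul_lt_top_general {Ω : Type*} [MeasurableSpace Ω] (μ : Measure Ω)
    (f g : Ω → ℂ) (hf : Measurable f)
    (hf' : ∫⁻ x, ENNReal.ofReal (Real.log (1 + ‖f x‖)) ∂μ < ∞)
    (hg' : ∫⁻ x, ENNReal.ofReal (Real.log (1 + ‖g x‖)) ∂μ < ∞) :
    ∫⁻ x, ENNReal.ofReal (Real.log (1 + ‖f x * g x‖)) ∂μ < ∞ :=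
  (lintegral_ofReal_log_one_add_norm_mul_le μ g hf.aemeasurable).trans_lt
    (ENNReal.add_lt_top.mpr ⟨hf', hg'⟩)

theorem lognorm_mul_lt_top {Ω : Type*} [MeasurableSpace Ω] (μ : Measure Ω)
    (f g : Ω → ℂ) (hf : Measurable f) (hg : Measurable g)
    (hf' : ∫⁻ x, ENNReal.ofReal (Real.log (1 + ‖f x‖)) ∂μ < ∞)
    (hg' : ∫⁻ x, ENNReal.ofReal (Real.log (1 + ‖g x‖)) ∂μ < ∞) :
    ∫⁻ x, ENNReal.ofReal (Real.log (1 + ‖f x * g x‖)) ∂μ < ∞ :=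
  lognorm_mul_lt_top_general μ f g hf hf' hg'
end

section
/- Let (Ω, 𝒜, μ) be a σ-finite measure space and let h : Ω → ℝ≥0 be measurable. Suppose h is not essentially bounded, i.e. there is no constant C with h x ≤ C for μ-almost every x. Then there exists a measurable function f : Ω → ℝ with f ≥ 0 such that ∫⁻ ENNReal.ofReal (Real.log (1 + f x)) ∂μ < ∞ but ∫⁻ ENNReal.ofReal (Real.log (1 + f x)) ∂(μ.withDensity h) = ∞. -/
/-!
If `h = dν/dμ` is not essentially bounded, then for every `n` the set `{2ⁿ < h}` has positive
measure, and by σ-finiteness it contains a set `Aₙ` of finite positive measure. The function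
`F = ∑ₙ (2ⁿ μ(Aₙ))⁻¹ 𝟙_{Aₙ}` has `∫ F dμ = ∑ 2⁻ⁿ < ∞` while `∫ F dν ≥ ∑ 1 = ∞`.
Taking `f = exp F - 1` turns `log (1 + f)` into `F`, off the `μ`-null (hence `ν`-null) set
where `F = ∞`.
-/

open MeasureTheory ENNReal
open scoped NNReal

section

variable {Ω : Type*} [MeasurableSpace Ω] {μ : Measure Ω}

theorem measure_setOf_lt_ne_zero_of_not_ae_le {h : Ω → ℝ≥0∞}
    (hub : ¬ ∃ C : ℝ≥0, ∀ᵐ x ∂μ, h x ≤ C) (C : ℝ≥0) : μ {x | (C : ℝ≥0∞) < h x} ≠ 0 :=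
  fun h0 => hub ⟨C, by simpa only [ae_iff, not_le] using h0⟩

theorem exists_measure_pos_lt_top_forall_lt_of_not_ae_le [SigmaFinite μ] {h : Ω → ℝ≥0∞}
    (hh : Measurable h) (hub : ¬ ∃ C : ℝ≥0, ∀ᵐ x ∂μ, h x ≤ C) (C : ℝ≥0) :
    ∃ A, MeasurableSet A ∧ 0 < μ A ∧ μ A < ∞ ∧ ∀ x ∈ A, (C : ℝ≥0∞) < h x := by
  obtain ⟨A, hAm, hAsub, hApos, hAfin⟩ := Measure.exists_subset_measure_lt_top
    (measurableSet_lt measurable_const hh) (measure_setOf_lt_ne_zero_of_not_ae_le hub C).bot_lt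
  exact ⟨A, hAm, hApos, hAfin, hAsub⟩

theorem mul_measure_le_withDensity_apply (h : Ω → ℝ≥0∞) {s : Set Ω} (hs : MeasurableSet s)
    {c : ℝ≥0∞} (hc : ∀ x ∈ s, c ≤ h x) : c * μ s ≤ μ.withDensity h s := by
  rw [withDensity_apply _ hs, ← setLIntegral_const]
  exact lintegral_mono_ae (ae_restrict_of_forall_mem hs hc)

theorem lintegral_tsum_indicator_const {A : ℕ → Set Ω} (hA : ∀ n, MeasurableSet (A n))
    (c : ℕ → ℝ≥0∞) :
    ∫⁻ x, ∑' n, (A n).indicator (fun _ => c n) x ∂μ = ∑' n, c n * μ (A n) := by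
  rw [lintegral_tsum fun n => (measurable_const.indicator (hA n)).aemeasurable]
  exact tsum_congr fun n => lintegral_indicator_const (hA n) (c n)

theorem exists_lintegral_lt_top_withDensity_eq_top [SigmaFinite μ] {h : Ω → ℝ≥0∞}
    (hh : Measurable h) (hub : ¬ ∃ C : ℝ≥0, ∀ᵐ x ∂μ, h x ≤ C) :
    ∃ F : Ω → ℝ≥0∞, Measurable F ∧ ∫⁻ x, F x ∂μ < ∞ ∧ ∫⁻ x, F x ∂(μ.withDensity h) = ∞ := by
  choose A hAm hApos hAfin hAh using
    fun n : ℕ => exists_measure_pos_lt_top_forall_lt_of_not_ae_le hh hub (2 ^ n)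
  have hA : ∀ n, (μ (A n))⁻¹ * μ (A n) = 1 :=
    fun n => ENNReal.inv_mul_cancel (hApos n).ne' (hAfin n).ne
  set c : ℕ → ℝ≥0∞ := fun n => 2⁻¹ ^ n * (μ (A n))⁻¹
  refine ⟨fun x => ∑' n, (A n).indicator (fun _ => c n) x,
    Measurable.tsum fun n => measurable_const.indicator (hAm n), ?_, ?_⟩
  · rw [lintegral_tsum_indicator_const hAm]
    calc ∑' n, c n * μ (A n) = ∑' n : ℕ, 2⁻¹ ^ n := tsum_congr fun n => by
          rw [mul_assoc, hA, mul_one]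
      _ < ∞ := by rw [ENNReal.tsum_geometric_two]; exact ofNat_lt_top
  · rw [lintegral_tsum_indicator_const hAm, eq_top_iff,
      ← ENNReal.tsum_const_eq_top_of_ne_zero (α := ℕ) one_ne_zero]
    refine ENNReal.tsum_le_tsum fun n => ?_
    calc (1 : ℝ≥0∞) = c n * (2 ^ n * μ (A n)) := by
          rw [mul_mul_mul_comm, ← ENNReal.inv_pow, ENNReal.inv_mul_cancel (by positivity)
            (pow_ne_top ofNat_ne_top), hA, mul_one]
      _ ≤ c n * μ.withDensity h (A n) := by
          gcongr
          exact mul_measure_le_withDensity_apply h (hAm n) fun x hx => by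
            simpa using (hAh n x hx).le

end

theorem exists_log_integrable_not_withDensity {Ω : Type*} [MeasurableSpace Ω]
    (μ : Measure Ω) [SigmaFinite μ] (h : Ω → NNReal) (hh : Measurable h)
    (hub : ¬ ∃ C : NNReal, ∀ᵐ x ∂μ, h x ≤ C) :
    ∃ f : Ω → ℝ, Measurable f ∧ (∀ x, 0 ≤ f x) ∧
      (∫⁻ x, ENNReal.ofReal (Real.log (1 + f x)) ∂μ < ∞) ∧
      (∫⁻ x, ENNReal.ofReal (Real.log (1 + f x))
          ∂(μ.withDensity fun x => (h x : ENNReal)) = ∞) := by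
  obtain ⟨F, hFm, hFμ, hFν⟩ := exists_lintegral_lt_top_withDensity_eq_top hh.coe_nnreal_ennreal
    (by simpa only [ENNReal.coe_le_coe] using hub)
  have hF : (fun x => ENNReal.ofReal (F x).toReal) =ᵐ[μ] F :=
    (ae_lt_top hFm hFμ.ne).mono fun x hx => ofReal_toReal hx.ne
  refine ⟨fun x => Real.exp (F x).toReal - 1, by fun_prop, fun x => ?_, ?_, ?_⟩
  · simp [Real.one_le_exp toReal_nonneg]
  · simpa only [add_sub_cancel, Real.log_exp, lintegral_congr_ae hF] using hFμ
  · simpa only [add_sub_cancel, Real.log_exp,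
      lintegral_congr_ae ((withDensity_absolutelyContinuous μ _).ae_eq hF)] using hFν
end

section
/- Let (Ω, 𝒜, μ) be a σ-finite measure space and let h : Ω → ℝ≥0 be measurable with 0 < h x < ∞ for μ-almost every x, and set ν = μ.withDensity h. Then the following are equivalent: (i) for every measurable f : Ω → ℂ, ∫⁻ ENNReal.ofReal (Real.log (1 + |f x|)) ∂μ < ∞ if and only if ∫⁻ ENNReal.ofReal (Real.log (1 + |f x|)) ∂ν < ∞; (ii) there exist constants c > 0 and C < ∞ such that c ≤ h x ≤ C for μ-almost every x. -/
/-!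
If `ρ` is not essentially bounded, σ-finiteness gives sets `Bₙ` of positive finite measure on
which `ρ > 2ⁿ`, and `g = ∑ₙ 2⁻ⁿ 𝟙_{Bₙ} / μ Bₙ` has `∫ g dμ = 2` but `∫ ρ g dμ ≥ ∑ₙ 1 = ∞`.
Since `t ↦ log (1 + t)` maps `[0, ∞)` onto itself, `g = log (1 + |f|)` for `f = exp g - 1`, so
`f` separates the two log-spaces. This applies to `ρ = h` over `μ`, and to `ρ = h⁻¹` over `ν`
because `μ = ν.withDensity h⁻¹`. Conversely, `c • μ ≤ ν ≤ C • μ` makes the two log-functionals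
comparable.
-/

open MeasureTheory ENNReal NNReal

section

variable {Ω : Type*} [MeasurableSpace Ω]

lemma lintegral_lt_top_iff_of_smul_le_of_le_smul {μ ν : Measure Ω} {c C : ℝ≥0∞}
    (hc : c ≠ 0) (hC : C ≠ ∞) (hcμ : c • μ ≤ ν) (hνC : ν ≤ C • μ) (F : Ω → ℝ≥0∞) :
    ∫⁻ x, F x ∂μ < ∞ ↔ ∫⁻ x, F x ∂ν < ∞ := by
  constructor
  · intro hμ
    calc ∫⁻ x, F x ∂ν ≤ ∫⁻ x, F x ∂(C • μ) := lintegral_mono' hνC le_rfl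
      _ = C * ∫⁻ x, F x ∂μ := lintegral_smul_measure C F
      _ < ∞ := mul_lt_top hC.lt_top hμ
  · intro hν
    refine lt_top_of_mul_ne_top_right ?_ hc
    rw [← smul_eq_mul, ← lintegral_smul_measure]
    exact ((lintegral_mono' hcμ le_rfl).trans_lt hν).ne

lemma essSup_eq_top_or_essSup_inv_eq_top {μ : Measure Ω} {h : Ω → ℝ≥0}
    (hbdd : ¬ ∃ c C : ℝ≥0, 0 < c ∧ ∀ᵐ x ∂μ, c ≤ h x ∧ h x ≤ C) :
    essSup (fun x => (h x : ℝ≥0∞)) μ = ∞ ∨ essSup (fun x => (h x : ℝ≥0∞)⁻¹) μ = ∞ := by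
  contrapose! hbdd
  obtain ⟨hup, hlow⟩ := hbdd
  set D := essSup (fun x => (h x : ℝ≥0∞)⁻¹) μ
  -- `D⁻¹` itself would be `∞` if `D = 0` (e.g. for `μ = 0`).
  refine ⟨(D + 1)⁻¹.toNNReal, (essSup (fun x => (h x : ℝ≥0∞)) μ).toNNReal,
    toNNReal_pos (by simpa using hlow) (by simp), ?_⟩
  filter_upwards [ae_le_essSup fun x => (h x : ℝ≥0∞), ae_le_essSup fun x => (h x : ℝ≥0∞)⁻¹]
    with x hx_le hx_inv_le
  refine ⟨?_, le_toNNReal_of_coe_le hx_le hup⟩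
  rw [← toNNReal_coe (h x)]
  refine toNNReal_mono coe_ne_top ?_
  rw [← ENNReal.inv_le_inv, inv_inv]
  exact hx_inv_le.trans le_self_add

lemma exists_lintegral_lt_top_and_lintegral_withDensity_eq_top {μ : Measure Ω} [SigmaFinite μ]
    {ρ : Ω → ℝ≥0∞} (hρ : Measurable ρ) (hess : essSup ρ μ = ∞) :
    ∃ g : Ω → ℝ≥0∞, Measurable g ∧ ∫⁻ x, g x ∂μ < ∞ ∧ ∫⁻ x, g x ∂(μ.withDensity ρ) = ∞ := by
  have hlarge : ∀ n : ℕ, μ {x | 2 ^ n < ρ x} ≠ 0 := by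
    intro n hnull
    have hle : essSup ρ μ ≤ 2 ^ n :=
      essSup_le_of_ae_le _ (by simpa [Filter.EventuallyLE, ae_iff] using hnull)
    exact (hess ▸ hle).not_gt (pow_lt_top ofNat_lt_top)
  choose B hBm hBsub hBpos hBfin using fun n => Measure.exists_subset_measure_lt_top
    (measurableSet_lt measurable_const hρ) (pos_iff_ne_zero.2 (hlarge n))
  set c : ℕ → ℝ≥0∞ := fun n => 2⁻¹ ^ n / μ (B n)
  have hcB : ∀ n, c n * μ (B n) = 2⁻¹ ^ n := fun n =>
    ENNReal.div_mul_cancel (hBpos n).ne' (hBfin n).ne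
  have hind : ∀ n, Measurable ((B n).indicator fun _ => c n) := fun n =>
    measurable_const.indicator (hBm n)
  refine ⟨fun x => ∑' n, (B n).indicator (fun _ => c n) x, .tsum hind, ?_, ?_⟩
  · rw [lintegral_tsum fun n => (hind n).aemeasurable]
    simp only [lintegral_indicator_const (hBm _), hcB, ENNReal.tsum_geometric_two]
    exact ofNat_lt_top
  · rw [lintegral_tsum fun n => (hind n).aemeasurable, eq_top_iff,
      ← ENNReal.tsum_const_eq_top_of_ne_zero (α := ℕ) one_ne_zero]
    refine ENNReal.tsum_le_tsum fun n => ?_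
    rw [lintegral_indicator_const (hBm n), withDensity_apply _ (hBm n)]
    calc 1 = c n * ∫⁻ _ in B n, 2 ^ n ∂μ := by
          rw [setLIntegral_const, mul_left_comm, hcB, ← mul_pow,
            ENNReal.mul_inv_cancel two_ne_zero ofNat_ne_top, one_pow]
      _ ≤ c n * ∫⁻ x in B n, ρ x ∂μ :=
          mul_le_mul_right (setLIntegral_mono hρ fun x hx => (hBsub n hx).le) _

lemma ofReal_log_one_add_norm_exp_sub_one {a : ℝ≥0∞} (ha : a ≠ ∞) :
    ENNReal.ofReal (Real.log (1 + ‖((Real.exp a.toReal - 1 : ℝ) : ℂ)‖)) = a := by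
  rw [Complex.norm_real, Real.norm_of_nonneg (sub_nonneg.2 (Real.one_le_exp toReal_nonneg)),
    add_sub_cancel, Real.log_exp, ofReal_toReal ha]

lemma exists_log_lintegral_lt_top_and_eq_top {μ ν : Measure Ω} (hμν : μ ≪ ν)
    {g : Ω → ℝ≥0∞} (hg : Measurable g) (hgν : ∫⁻ x, g x ∂ν < ∞) (hgμ : ∫⁻ x, g x ∂μ = ∞) :
    ∃ f : Ω → ℂ, Measurable f ∧
      ∫⁻ x, ENNReal.ofReal (Real.log (1 + ‖f x‖)) ∂ν < ∞ ∧
      ∫⁻ x, ENNReal.ofReal (Real.log (1 + ‖f x‖)) ∂μ = ∞ := by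
  set f : Ω → ℂ := fun x => ((Real.exp (g x).toReal - 1 : ℝ) : ℂ)
  have hf : Measurable f := by fun_prop
  have hfg : (fun x => ENNReal.ofReal (Real.log (1 + ‖f x‖))) =ᵐ[ν] g :=
    (ae_lt_top hg hgν.ne).mono fun x hx => ofReal_log_one_add_norm_exp_sub_one hx.ne
  exact ⟨f, hf, by rwa [lintegral_congr_ae hfg], by rwa [lintegral_congr_ae (hμν.ae_eq hfg)]⟩

end

theorem loglog_eq_iff_bounded_of_pos {Ω : Type*} [MeasurableSpace Ω]
    (μ : Measure Ω) [SigmaFinite μ] (h : Ω → NNReal) (hh : Measurable h)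
    (hpos : ∀ᵐ x ∂μ, 0 < h x) :
    (∀ f : Ω → ℂ, Measurable f →
        (∫⁻ x, ENNReal.ofReal (Real.log (1 + ‖f x‖)) ∂μ < ∞ ↔
          ∫⁻ x, ENNReal.ofReal (Real.log (1 + ‖f x‖))
            ∂(μ.withDensity fun x => (h x : ENNReal)) < ∞)) ↔
      ∃ c C : NNReal, 0 < c ∧ ∀ᵐ x ∂μ, c ≤ h x ∧ h x ≤ C := by
  have hh' : Measurable fun x => (h x : ℝ≥0∞) := hh.coe_nnreal_ennreal
  constructor
  · intro hiff
    by_contra hbdd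
    rcases essSup_eq_top_or_essSup_inv_eq_top hbdd with hup | hlow
    · obtain ⟨g, hg, hgμ, hgν⟩ := exists_lintegral_lt_top_and_lintegral_withDensity_eq_top hh' hup
      obtain ⟨f, hf, hfμ, hfν⟩ :=
        exists_log_lintegral_lt_top_and_eq_top (withDensity_absolutelyContinuous μ _) hg hgμ hgν
      exact ((hiff f hf).1 hfμ).ne hfν
    · have hne : ∀ᵐ x ∂μ, (h x : ℝ≥0∞) ≠ 0 := hpos.mono fun x hx => by simpa using hx.ne'
      have hμν := withDensity_absolutelyContinuous' hh'.aemeasurable hne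
      obtain ⟨g, hg, hgν, hgμ⟩ := exists_lintegral_lt_top_and_lintegral_withDensity_eq_top
        (ρ := fun x => (h x : ℝ≥0∞)⁻¹) hh'.inv (top_unique (hlow ▸ essSup_mono_measure hμν))
      rw [withDensity_inv_same hh' hne (.of_forall fun _ => coe_ne_top)] at hgμ
      obtain ⟨f, hf, hfν, hfμ⟩ := exists_log_lintegral_lt_top_and_eq_top hμν hg hgν hgμ
      exact ((hiff f hf).2 hfν).ne hfμ
  · rintro ⟨c, C, hc, hcC⟩ f -
    refine lintegral_lt_top_iff_of_smul_le_of_le_smul (coe_ne_zero.2 hc.ne')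
      (coe_ne_top (r := C)) ?_ ?_ _
    · rw [← withDensity_const]
      exact withDensity_mono (hcC.mono fun x hx => coe_le_coe.2 hx.1)
    · rw [← withDensity_const]
      exact withDensity_mono (hcC.mono fun x hx => coe_le_coe.2 hx.2)
end

section
/- Let (Ω, 𝒜, μ) be a measure space, let h : Ω → ℝ≥0 be measurable, and let (A_k)_{k≥1} be a sequence of pairwise disjoint measurable sets with 0 < μ(A_k) < ∞ for every k ≥ 1 and with h x ≥ k for all x ∈ A_k. Define g : Ω → ℝ≥0∞ by g x = 1/(k² · μ(A_k)) for x ∈ A_k and g x = 0 for x outside ⋃_k A_k. Then ∫⁻ g ∂μ = ∑_{k≥1} 1/k² < ∞, while ∫⁻ g ∂(μ.withDensity h) = ∫⁻ h·g ∂μ = ∞. -/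
/-!
On `A (k + 1)` the function `g` is the constant `1 / ((k + 1) ^ 2 μ (A (k + 1)))`, so its integral
there is `1 / (k + 1) ^ 2`, and summing over the disjoint blocks gives the Basel series. Since
`h ≥ k + 1` on the same block, `h * g` has integral at least `1 / (k + 1)` there, and the harmonic
series diverges.
-/

open MeasureTheory ENNReal

theorem ENNReal.tsum_one_div_natCast_add_one_pow_lt_top_iff {p : ℕ} :
    ∑' k : ℕ, 1 / ((k : ℝ≥0∞) + 1) ^ p < ∞ ↔ 1 < p := by
  have hcoe (k : ℕ) :
      1 / ((k : ℝ≥0∞) + 1) ^ p = ((1 / ((k : NNReal) + 1) ^ p : NNReal) : ℝ≥0∞) := by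
    rw [ENNReal.coe_div (by positivity)]
    push_cast
    rfl
  simp_rw [hcoe, lt_top_iff_ne_top, ENNReal.tsum_coe_ne_top_iff_summable, ← NNReal.summable_coe]
  refine Iff.trans ?_ ((summable_nat_add_iff 1).trans Real.summable_one_div_nat_pow)
  push_cast
  rfl

namespace MeasureTheory

open Function Set

variable {Ω : Type*} [MeasurableSpace Ω] {μ : Measure Ω}

theorem lintegral_eq_tsum_setLIntegral {ι : Type*} [Countable ι] {B : ι → Set Ω}
    (hB : ∀ i, MeasurableSet (B i)) (hd : Pairwise (Disjoint on B)) {f : Ω → ℝ≥0∞}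
    (hf : ∀ x ∉ ⋃ i, B i, f x = 0) :
    ∫⁻ x, f x ∂μ = ∑' i, ∫⁻ x in B i, f x ∂μ := by
  rw [← lintegral_iUnion hB hd, ← lintegral_indicator (MeasurableSet.iUnion hB)]
  congr 1 with x
  by_cases hx : x ∈ ⋃ i, B i
  · rw [indicator_of_mem hx]
  · rw [indicator_of_notMem hx, hf x hx]

variable {s : Set Ω} {a : ℝ≥0∞} {f : Ω → ℝ≥0∞}

theorem setLIntegral_eq_one_div_of_eqOn (hs : MeasurableSet s) (hs0 : μ s ≠ 0) (hst : μ s ≠ ∞)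
    (hf : EqOn f (fun _ => 1 / (a * μ s)) s) :
    ∫⁻ x in s, f x ∂μ = 1 / a := by
  rw [setLIntegral_congr_fun hs hf, setLIntegral_const, mul_comm, ← mul_div_assoc, mul_one,
    ← ENNReal.mul_div_mul_right 1 a hs0 hst, one_mul]

theorem one_div_le_setLIntegral_mul_of_eqOn (hs : MeasurableSet s) (hs0 : μ s ≠ 0)
    (hst : μ s ≠ ∞) (ha0 : a ≠ 0) (hat : a ≠ ∞) (hf : EqOn f (fun _ => 1 / (a ^ 2 * μ s)) s)
    {w : Ω → ℝ≥0∞} (hw : ∀ x ∈ s, a ≤ w x) :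
    1 / a ≤ ∫⁻ x in s, w x * f x ∂μ :=
  calc 1 / a = a * (1 / a ^ 2) := by
        rw [← mul_div_assoc, mul_one, sq, ← ENNReal.mul_div_mul_left 1 a ha0 hat, mul_one]
    _ = ∫⁻ x in s, a * f x ∂μ := by
        rw [lintegral_const_mul' _ _ hat, setLIntegral_eq_one_div_of_eqOn hs hs0 hst hf]
    _ ≤ ∫⁻ x in s, w x * f x ∂μ :=
        setLIntegral_mono' hs fun x hx => mul_le_mul_left (hw x hx) _

end MeasureTheory

theorem lintegral_counterexample_construction {Ω : Type*} [MeasurableSpace Ω]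
    (μ : Measure Ω) (h : Ω → NNReal) (hh : Measurable h)
    (A : ℕ → Set Ω) (hAmeas : ∀ k, 1 ≤ k → MeasurableSet (A k))
    (hdisj : ∀ j k, 1 ≤ j → 1 ≤ k → j ≠ k → Disjoint (A j) (A k))
    (hpos : ∀ k, 1 ≤ k → 0 < μ (A k)) (hfin : ∀ k, 1 ≤ k → μ (A k) < ∞)
    (hgeq : ∀ k, 1 ≤ k → ∀ x ∈ A k, (k : NNReal) ≤ h x)
    (g : Ω → ENNReal)
    (hg_on : ∀ k, 1 ≤ k → ∀ x ∈ A k, g x = 1 / ((k : ENNReal) ^ 2 * μ (A k)))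
    (hg_off : ∀ x, x ∉ ⋃ k ∈ {k : ℕ | 1 ≤ k}, A k → g x = 0) :
    (∫⁻ x, g x ∂μ = ∑' k : ℕ, 1 / ((k : ENNReal) + 1) ^ 2) ∧
      (∑' k : ℕ, 1 / ((k : ENNReal) + 1) ^ 2 < ∞) ∧
      (∫⁻ x, g x ∂(μ.withDensity fun x => (h x : ENNReal)) =
        ∫⁻ x, (h x : ENNReal) * g x ∂μ) ∧
      ∫⁻ x, (h x : ENNReal) * g x ∂μ = ∞ := by
  have hA (k : ℕ) : MeasurableSet (A (k + 1)) := hAmeas _ k.succ_pos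
  have hd : Pairwise (Function.onFun Disjoint fun k => A (k + 1)) := fun j k hjk =>
    hdisj _ _ (by omega) (by omega) (by omega)
  have hμ0 (k : ℕ) : μ (A (k + 1)) ≠ 0 := (hpos _ k.succ_pos).ne'
  have hμt (k : ℕ) : μ (A (k + 1)) ≠ ∞ := (hfin _ k.succ_pos).ne
  have hg_off' (x) (hx : x ∉ ⋃ k, A (k + 1)) : g x = 0 := by
    refine hg_off x ?_
    simp only [Set.mem_iUnion, Set.mem_ofPred_eq, not_exists] at hx ⊢
    intro k hk hxk
    exact hx (k - 1) (by rwa [Nat.sub_add_cancel hk])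
  have hg_on' (k : ℕ) :
      Set.EqOn g (fun _ => 1 / (((k : ℝ≥0∞) + 1) ^ 2 * μ (A (k + 1)))) (A (k + 1)) := by
    intro x hx
    rw [hg_on _ k.succ_pos x hx]
    push_cast
    rfl
  have harmonic : ∑' k : ℕ, 1 / ((k : ℝ≥0∞) + 1) = ∞ := by
    simpa using (tsum_one_div_natCast_add_one_pow_lt_top_iff (p := 1)).not.2 (lt_irrefl 1)
  refine ⟨?_, tsum_one_div_natCast_add_one_pow_lt_top_iff.2 one_lt_two,
    lintegral_withDensity_eq_lintegral_mul_non_measurable _ hh.coe_nnreal_ennreal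
      (ae_of_all _ fun _ => coe_lt_top) g, ?_⟩
  · rw [lintegral_eq_tsum_setLIntegral hA hd hg_off']
    exact tsum_congr fun k => setLIntegral_eq_one_div_of_eqOn (hA k) (hμ0 k) (hμt k) (hg_on' k)
  · rw [lintegral_eq_tsum_setLIntegral hA hd fun x hx => by rw [hg_off' x hx, mul_zero],
      eq_top_iff, ← harmonic]
    refine ENNReal.tsum_le_tsum fun k => one_div_le_setLIntegral_mul_of_eqOn (hA k) (hμ0 k)
      (hμt k) (by simp) (by simp) (hg_on' k) fun x hx => ?_
    exact_mod_cast hgeq _ k.succ_pos x hx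
end
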